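/- Let B = (b_{i1...im}) be a real tensor of order m ≥ 2 and dimension n ≥ 2. If B is a B-tensor, then B is a quasi-double B-tensor. -/
import Mathlib


open Finset

/-- The set of index tuples `(i, i₂, …, i_m)` in row `i` of an order-`m`, dimension-`n`
tensor, i.e. all tuples whose first index is `i`. -/
def rowSet (m n : ℕ) (i : Fin n) : Finset (Fin m → Fin n) :=
  Finset.univ.filter fun α => ∀ t : Fin m, (t : ℕ) = 0 → α t = i

/-- The set of off-diagonal index tuples in row `i`: tuples whose first index is `i`
and whose indices are not all equal to `i` (i.e. `δ_{i i₂ … i_m} = 0`). -/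
def offRowSet (m n : ℕ) (i : Fin n) : Finset (Fin m → Fin n) :=
  Finset.univ.filter fun α => (∀ t : Fin m, (t : ℕ) = 0 → α t = i) ∧ α ≠ fun _ => i

/-- The diagonal entry `b_{i…i}`. -/
def diagEntry {m n : ℕ} (B : (Fin m → Fin n) → ℝ) (i : Fin n) : ℝ :=
  B fun _ => i

/-- `β_i(B) = max {0, b_{i j₂ ⋯ j_m} : δ_{i j₂ … j_m} = 0}`. -/
def betaMax {m n : ℕ} (B : (Fin m → Fin n) → ℝ) (i : Fin n) : ℝ :=
  (offRowSet m n i).fold max 0 B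

/-- `Δ_i(B) = Σ_{δ_{i i₂…i_m} = 0} (β_i(B) - b_{i i₂ ⋯ i_m})`. -/
def DeltaSum {m n : ℕ} (B : (Fin m → Fin n) → ℝ) (i : Fin n) : ℝ :=
  ∑ α ∈ offRowSet m n i, (betaMax B i - B α)

/-- `r_i(B) = Σ_{δ_{i i₂…i_m} = 0} |b_{i i₂ ⋯ i_m}|`. -/
def rowAbsSum {m n : ℕ} (B : (Fin m → Fin n) → ℝ) (i : Fin n) : ℝ :=
  ∑ α ∈ offRowSet m n i, |B α|

/-- The index tuple `(j, i, i, …, i)`. -/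
def spike (m n : ℕ) (j i : Fin n) : Fin m → Fin n :=
  fun t => if (t : ℕ) = 0 then j else i

/-- `Δ_j^i(B) = Δ_j(B) - (β_j(B) - b_{j i⋯i})`. -/
def DeltaSubSum {m n : ℕ} (B : (Fin m → Fin n) → ℝ) (j i : Fin n) : ℝ :=
  DeltaSum B j - (betaMax B j - B (spike m n j i))

/-- `r_j^i(B) = r_j(B) - |b_{j i⋯i}|`. -/
def rowAbsSubSum {m n : ℕ} (B : (Fin m → Fin n) → ℝ) (j i : Fin n) : ℝ :=
  rowAbsSum B j - |B (spike m n j i)|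

/-- `B` is a B-tensor: each row sum is positive and `(1/n^{m-1})` times the row sum
strictly dominates every off-diagonal entry of that row. -/
def IsBTensor {m n : ℕ} (B : (Fin m → Fin n) → ℝ) : Prop :=
  ∀ i : Fin n,
    0 < ∑ α ∈ rowSet m n i, B α ∧
    ∀ α ∈ offRowSet m n i,
      B α < (1 / (n : ℝ) ^ (m - 1)) * ∑ α' ∈ rowSet m n i, B α'

/-- `B` is a double B-tensor. -/
def IsDoubleBTensor {m n : ℕ} (B : (Fin m → Fin n) → ℝ) : Prop :=
  (∀ i, betaMax B i < diagEntry B i) ∧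
  (∀ i, DeltaSum B i ≤ diagEntry B i - betaMax B i) ∧
  (∀ i j, i ≠ j →
    DeltaSum B i * DeltaSum B j <
      (diagEntry B i - betaMax B i) * (diagEntry B j - betaMax B j))

/-- `B` is a quasi-double B-tensor. -/
def IsQuasiDoubleBTensor {m n : ℕ} (B : (Fin m → Fin n) → ℝ) : Prop :=
  (∀ i, betaMax B i < diagEntry B i) ∧
  ∀ i j, i ≠ j →
    (betaMax B j - B (spike m n j i)) * DeltaSum B i <
      (diagEntry B i - betaMax B i) *
        (diagEntry B j - betaMax B j - DeltaSubSum B j i)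

/-- `B` is a Z-tensor: all off-diagonal entries are non-positive. -/
def IsZTensor {m n : ℕ} (B : (Fin m → Fin n) → ℝ) : Prop :=
  ∀ α : Fin m → Fin n, (∃ s t, α s ≠ α t) → B α ≤ 0

/-- `B` is a symmetric tensor: invariant under permutations of the indices. -/
def IsSymmetricTensor {m n : ℕ} (B : (Fin m → Fin n) → ℝ) : Prop :=
  ∀ (σ : Equiv.Perm (Fin m)) (α : Fin m → Fin n), B (α ∘ σ) = B α

/-- `B` is doubly strictly diagonally dominant (for order `m > 2`). -/
def IsDSDD {m n : ℕ} (B : (Fin m → Fin n) → ℝ) : Prop :=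
  (∀ i, rowAbsSum B i ≤ |diagEntry B i|) ∧
  (∀ i j, i ≠ j → rowAbsSum B i * rowAbsSum B j < |diagEntry B i| * |diagEntry B j|)

/-- `B` is quasi-doubly strictly diagonally dominant. -/
def IsQDSDD {m n : ℕ} (B : (Fin m → Fin n) → ℝ) : Prop :=
  ∀ i j, i ≠ j →
    rowAbsSum B i * |B (spike m n j i)| <
      |diagEntry B i| * (|diagEntry B j| - rowAbsSubSum B j i)

/-- `B x^m = Σ b_{i₁⋯i_m} x_{i₁} ⋯ x_{i_m}`. -/
def tensorApply {m n : ℕ} (B : (Fin m → Fin n) → ℝ) (x : Fin n → ℝ) : ℝ :=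
  ∑ α : Fin m → Fin n, B α * ∏ t, x (α t)

/-- `B` is positive definite: `B x^m > 0` for every nonzero `x ∈ ℝ^n`. -/
def IsPosDefTensor {m n : ℕ} (B : (Fin m → Fin n) → ℝ) : Prop :=
  ∀ x : Fin n → ℝ, x ≠ 0 → 0 < tensorApply B x

/-- `(B x^{m-1})_i = Σ_{i₂,…,i_m} b_{i i₂ ⋯ i_m} x_{i₂} ⋯ x_{i_m}`. -/
def rowApply {m n : ℕ} (B : (Fin m → Fin n) → ℝ) (x : Fin n → ℝ) (i : Fin n) : ℝ :=
  ∑ α ∈ rowSet m n i, B α * ∏ t ∈ Finset.univ.filter (fun t : Fin m => (t : ℕ) ≠ 0), x (α t)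

/-- `B` is a P-tensor: for every nonzero `x`, `max_i x_i (B x^{m-1})_i > 0`. -/
def IsPTensor {m n : ℕ} (B : (Fin m → Fin n) → ℝ) : Prop :=
  ∀ x : Fin n → ℝ, x ≠ 0 → ∃ i, 0 < x i * rowApply B x i

/-- `lam` is an H-eigenvalue of `B`. -/
def IsHEigenvalue {m n : ℕ} (B : (Fin m → Fin n) → ℝ) (lam : ℝ) : Prop :=
  ∃ x : Fin n → ℝ, x ≠ 0 ∧ ∀ i, rowApply B x i = lam * x i ^ (m - 1)

/-- The partially all one tensor `ε^J`: entry `1` if all indices lie in `J`, else `0`. -/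
def epsTensor (m n : ℕ) (J : Finset (Fin n)) : (Fin m → Fin n) → ℝ :=
  fun α => if ∀ t, α t ∈ J then 1 else 0

section Aux

variable {m n : ℕ} (B : (Fin m → Fin n) → ℝ)

lemma const_notMem_offRowSet (i : Fin n) : (fun _ => i) ∉ offRowSet m n i := by
  simp [offRowSet]

lemma rowSet_eq_insert (i : Fin n) :
    rowSet m n i = insert (fun _ => i) (offRowSet m n i) := by
  ext α
  simp only [rowSet, offRowSet, Finset.mem_filter, Finset.mem_univ, true_and,
    Finset.mem_insert]
  constructor
  · intro h
    by_cases hc : α = fun _ => i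
    · exact Or.inl hc
    · exact Or.inr ⟨h, hc⟩
  · rintro (rfl | ⟨h, _⟩)
    · intro t _; rfl
    · exact h

lemma card_rowSet (hm : 1 ≤ m) (i : Fin n) :
    (rowSet m n i).card = n ^ (m - 1) := by
  obtain ⟨m', rfl⟩ : ∃ m', m = m' + 1 := ⟨m - 1, by omega⟩
  have : (rowSet (m' + 1) n i).card = (Finset.univ : Finset (Fin m' → Fin n)).card := by
    refine Finset.card_bij' (fun α _ => fun t : Fin m' => α t.succ)
      (fun g _ => Fin.cons i g) ?_ ?_ ?_ ?_
    · intro α _; exact Finset.mem_univ _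
    · intro g _
      simp only [rowSet, Finset.mem_filter, Finset.mem_univ, true_and]
      intro t ht
      have : t = 0 := Fin.ext ht
      subst this
      simp
    · intro α hα
      simp only [rowSet, Finset.mem_filter, Finset.mem_univ, true_and] at hα
      funext t
      cases t using Fin.cases with
      | zero => simpa using (hα 0 rfl).symm
      | succ t => simp
    · intro g _
      funext t
      simp
  rw [this]
  simp

lemma betaMax_nonneg (i : Fin n) : 0 ≤ betaMax B i :=
  (Finset.le_fold_max _).2 (Or.inl le_rfl)

lemma le_betaMax {i : Fin n} {α : Fin m → Fin n} (hα : α ∈ offRowSet m n i) :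
    B α ≤ betaMax B i :=
  (Finset.le_fold_max _).2 (Or.inr ⟨α, hα, le_rfl⟩)

lemma DeltaSum_nonneg (i : Fin n) : 0 ≤ DeltaSum B i :=
  Finset.sum_nonneg fun α hα => sub_nonneg.2 (le_betaMax B hα)

lemma spike_mem_offRowSet (hm : 2 ≤ m) {i j : Fin n} (hij : i ≠ j) :
    spike m n j i ∈ offRowSet m n j := by
  simp only [offRowSet, Finset.mem_filter, Finset.mem_univ, true_and]
  constructor
  · intro t ht
    simp [spike, ht]
  · intro h
    have := congrFun h ⟨1, by omega⟩
    simp [spike] at this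
    exact hij this

/-- Key inequality: `d_i - β_i - Δ_i > 0` for a B-tensor. -/
lemma key_ineq (hm : 2 ≤ m) (hn : 2 ≤ n) (hB : IsBTensor B) (i : Fin n) :
    DeltaSum B i < diagEntry B i - betaMax B i := by
  obtain ⟨hpos, hdom⟩ := hB i
  set S : ℝ := ∑ α ∈ rowSet m n i, B α with hS
  have hnm : (1 : ℕ) ≤ n ^ (m - 1) := Nat.one_le_pow _ _ (by omega)
  have hnmR : (0 : ℝ) < (n : ℝ) ^ (m - 1) := by positivity
  -- betaMax < S / n^(m-1)
  have hbeta : betaMax B i < (1 / (n : ℝ) ^ (m - 1)) * S := by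
    apply (Finset.fold_max_lt _).2
    refine ⟨by positivity, fun α hα => hdom α hα⟩
  have hbeta' : (n : ℝ) ^ (m - 1) * betaMax B i < S := by
    rw [one_div] at hbeta
    calc (n : ℝ) ^ (m - 1) * betaMax B i
        < (n : ℝ) ^ (m - 1) * (((n : ℝ) ^ (m - 1))⁻¹ * S) := by
          exact mul_lt_mul_of_pos_left hbeta hnmR
      _ = S := by field_simp
  -- S = diag + sum over offRowSet
  have hsplit : S = diagEntry B i + ∑ α ∈ offRowSet m n i, B α := by
    rw [hS, rowSet_eq_insert, Finset.sum_insert (const_notMem_offRowSet i)]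
    rfl
  have hcard : ((offRowSet m n i).card : ℝ) = (n : ℝ) ^ (m - 1) - 1 := by
    have h1 : (rowSet m n i).card = (offRowSet m n i).card + 1 := by
      rw [rowSet_eq_insert, Finset.card_insert_of_notMem (const_notMem_offRowSet i)]
    have h2 := card_rowSet (m := m) (n := n) (by omega) i
    have : ((offRowSet m n i).card : ℝ) + 1 = ((n : ℝ)) ^ (m - 1) := by
      rw [← Nat.cast_one, ← Nat.cast_add, ← h1, h2]
      push_cast
      ring
    linarith
  have hDelta : DeltaSum B i
      = ((n : ℝ) ^ (m - 1) - 1) * betaMax B i - ∑ α ∈ offRowSet m n i, B α := by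
    rw [DeltaSum, Finset.sum_sub_distrib, Finset.sum_const, nsmul_eq_mul, hcard]
  rw [hDelta]
  have := hsplit
  nlinarith [hbeta']

end Aux

/-- every B-tensor is a quasi-double B-tensor. -/
theorem stmt4 (m n : ℕ) (hm : 2 ≤ m) (hn : 2 ≤ n) (B : (Fin m → Fin n) → ℝ)
    (hB : IsBTensor B) : IsQuasiDoubleBTensor B := by
  constructor
  · intro i
    have h1 := key_ineq B hm hn hB i
    have h2 := DeltaSum_nonneg B i
    linarith
  · intro i j hij
    have hDi := key_ineq B hm hn hB i
    have hDj := key_ineq B hm hn hB j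
    have hΔi := DeltaSum_nonneg B i
    have ht : 0 ≤ betaMax B j - B (spike m n j i) :=
      sub_nonneg.2 (le_betaMax B (spike_mem_offRowSet hm hij))
    have heq : diagEntry B j - betaMax B j - DeltaSubSum B j i
        = (diagEntry B j - betaMax B j - DeltaSum B j)
          + (betaMax B j - B (spike m n j i)) := by
      unfold DeltaSubSum; ring
    rw [heq]
    nlinarith
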